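/- Let $G=(V,E)$ be a simple graph, $k$ a field, and $k[G]$ the toric ring of $G$, defined as the image of the $k$-algebra map $\phi_G : k[E] \to k[V]$ sending the variable corresponding to an edge $e=\{x,y\}$ to the monomial $xy$. If $H$ is an induced subgraph of $G$, then the natural inclusion $k[H] \hookrightarrow k[G]$ is an algebra retract; that is, there is a surjective $k$-algebra homomorphism $\epsilon : k[G] \to k[H]$ with $\epsilon \circ \iota = \mathrm{id}_{k[H]}$, where $\iota$ is the inclusion. -/

import Mathlib

/-!
STATEMENT 0: If `H` is an induced subgraph of `G`, the natural inclusion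
`k[H] ↪ k[G]` of toric rings is an algebra retract: there is a surjective
`k`-algebra homomorphism `ε : k[G] → k[H]` with `ε ∘ ι = id`.
-/

open MvPolynomial

variable (k : Type*) [Field k] {V : Type*}

/-- The monomial `x * y` associated to an edge `e = {x, y}`. -/
noncomputable def edgeMonomial (e : Sym2 V) : MvPolynomial V k :=
  Sym2.lift ⟨fun x y => X x * X y, fun _ _ => mul_comm _ _⟩ e

/-- The monomial map `φ_G : k[E] → k[V]`, sending the edge variable `e = {x,y}` to `xy`. -/
noncomputable def toricMap (G : SimpleGraph V) :
    MvPolynomial G.edgeSet k →ₐ[k] MvPolynomial V k :=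
  aeval fun e => edgeMonomial k e.1

/-- The toric ring `k[G]`, the image of `φ_G`. -/
noncomputable def toricRing (G : SimpleGraph V) : Subalgebra k (MvPolynomial V k) :=
  (toricMap k G).range

/-
Setting the variables outside `U` to zero is a `k`-algebra endomorphism of `k[V]` that sends the
edge monomial `ab` to itself when `a, b ∈ U` and to `0` otherwise. Since `H` is the subgraph of
`G` induced on `U`, it therefore maps `k[G]` into `k[H]` and fixes `k[H]` pointwise.
-/

namespace Subalgebra

variable {R S : Type*} [CommSemiring R] [Semiring S] [Algebra R S]

theorem exists_retraction_of_algHom {A B : Subalgebra R S} (hle : A ≤ B) (π : S →ₐ[R] S)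
    (hmap : B.map π ≤ A) (hfix : Set.EqOn π (AlgHom.id R S) A) :
    ∃ ε : B →ₐ[R] A, Function.Surjective ε ∧ ∀ t : A, ε (inclusion hle t) = t := by
  have hmem (x : B) : π x ∈ A := hmap ⟨x, x.2, rfl⟩
  have hε (t : A) : (π.comp B.val).codRestrict A hmem (inclusion hle t) = t :=
    Subtype.ext (hfix t.2)
  exact ⟨(π.comp B.val).codRestrict A hmem, fun t => ⟨_, hε t⟩, hε⟩

end Subalgebra

theorem toricRing_eq_adjoin (G : SimpleGraph V) :
    toricRing k G = Algebra.adjoin k (edgeMonomial k '' G.edgeSet) := by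
  rw [toricRing, toricMap, ← Algebra.adjoin_range_eq_range_aeval, Set.image_eq_range]

theorem edgeMonomial_mem_toricRing {G : SimpleGraph V} {e : Sym2 V} (he : e ∈ G.edgeSet) :
    edgeMonomial k e ∈ toricRing k G := by
  rw [toricRing_eq_adjoin]
  exact Algebra.subset_adjoin ⟨e, he, rfl⟩

theorem toricRing_mono {G H : SimpleGraph V} (h : H ≤ G) : toricRing k H ≤ toricRing k G := by
  simp only [toricRing_eq_adjoin]
  exact Algebra.adjoin_mono (Set.image_mono (SimpleGraph.edgeSet_mono h))

noncomputable def restrictVars (U : Set V) : MvPolynomial V k →ₐ[k] MvPolynomial V k :=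
  open Classical in aeval fun v => if v ∈ U then X v else 0

theorem restrictVars_edgeMonomial (U : Set V) (a b : V) [Decidable (a ∈ U ∧ b ∈ U)] :
    restrictVars k U (edgeMonomial k s(a, b)) =
      if a ∈ U ∧ b ∈ U then edgeMonomial k s(a, b) else 0 := by
  by_cases ha : a ∈ U <;> by_cases hb : b ∈ U <;> simp [restrictVars, edgeMonomial, ha, hb]

variable {k}

theorem map_restrictVars_toricRing_le {G H : SimpleGraph V} {U : Set V}
    (hH : ∀ a b, G.Adj a b → a ∈ U → b ∈ U → H.Adj a b) :
    (toricRing k G).map (restrictVars k U) ≤ toricRing k H := by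
  rw [toricRing_eq_adjoin, AlgHom.map_adjoin, Algebra.adjoin_le_iff]
  rintro _ ⟨_, ⟨e, he, rfl⟩, rfl⟩
  induction e using Sym2.ind with
  | _ a b =>
    classical
    rw [restrictVars_edgeMonomial]
    split_ifs with hab
    · exact edgeMonomial_mem_toricRing k (hH a b he hab.1 hab.2)
    · exact zero_mem _

theorem restrictVars_eqOn_toricRing {H : SimpleGraph V} {U : Set V}
    (hU : ∀ a b, H.Adj a b → a ∈ U ∧ b ∈ U) :
    Set.EqOn (restrictVars k U) (AlgHom.id k _) (toricRing k H) := by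
  rw [toricRing_eq_adjoin, AlgHom.eqOn_adjoin_iff]
  rintro _ ⟨e, he, rfl⟩
  induction e using Sym2.ind with
  | _ a b =>
    classical
    rw [restrictVars_edgeMonomial, if_pos (hU a b he), AlgHom.id_apply]

theorem toricRing_inclusion_isRetract (G H : SimpleGraph V) (U : Set V)
    (hInd : ∀ a b, H.Adj a b ↔ (G.Adj a b ∧ a ∈ U ∧ b ∈ U)) :
    ∃ hle : toricRing k H ≤ toricRing k G,
      ∃ ε : toricRing k G →ₐ[k] toricRing k H,
        Function.Surjective ε ∧
          ∀ t : toricRing k H, ε (Subalgebra.inclusion hle t) = t := by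
  have hle : toricRing k H ≤ toricRing k G :=
    toricRing_mono k fun a b h => ((hInd a b).1 h).1
  refine ⟨hle, Subalgebra.exists_retraction_of_algHom hle (restrictVars k U) ?_ ?_⟩
  · exact map_restrictVars_toricRing_le fun a b hG ha hb => (hInd a b).2 ⟨hG, ha, hb⟩
  · exact restrictVars_eqOn_toricRing fun a b h => ((hInd a b).1 h).2
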